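/- For all n ≥ 0 and all x, the Daehee polynomials of the second kind satisfy Ď_n(x) = ∑_{l=0}^{n} (-1)^l s(n,l) B_l(x), where s(n,l) are the signed Stirling numbers of the first kind and B_l(x) are the Bernoulli polynomials. -/

import Mathlib

open PowerSeries Finset

noncomputable def logOneAdd : PowerSeries ℚ :=
  PowerSeries.mk fun k => if k = 0 then 0 else (-1 : ℚ)^(k+1) / k

noncomputable def onePow (x : ℚ) : PowerSeries ℚ :=
  PowerSeries.mk fun k => (∏ i ∈ Finset.range k, (x - (i : ℚ))) / (Nat.factorial k : ℚ)

noncomputable def expX (x : ℚ) : PowerSeries ℚ :=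
  PowerSeries.mk fun k => x ^ k / (Nat.factorial k : ℚ)

open scoped Nat

/-! Over `ℚ`, both `exp (y • log (1 + X))` and `(1 + X) ^ y` solve `(1 + X) F' = y F` with `F(0) = 1`,
so they coincide. Comparing coefficients of `yᵐ` in `[Xⁿ] exp (y • log (1 + X)) = (y)ₙ / n!`
identifies `[Xⁿ] log (1 + X) ^ m` with `m! / n! · s(n, m)`. Substituting `log (1 + X)` into the
Bernoulli generating function at `1 - x` yields `log (1 + X) (1 + X) ^ (1 - x) / X`, which is the
Daehee generating function; its `n`-th coefficient is therefore `∑ₘ s(n, m) Bₘ(1 - x) / n!`, and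
`Bₘ(1 - x) = (-1)ᵐ Bₘ(x)` finishes the proof. -/

namespace PowerSeries

variable {R : Type*} [CommRing R]

theorem derivative_rescale (a : R) (f : R⟦X⟧) :
    d⁄dX R (rescale a f) = C a * rescale a (d⁄dX R f) := by
  ext n
  simp only [coeff_derivative, coeff_rescale, coeff_C_mul, pow_succ]
  ring

theorem coeff_succ_of_one_add_X_mul_derivative {c : R} {F : R⟦X⟧}
    (h : (1 + X) * d⁄dX R F = C c * F) (n : ℕ) :
    (n + 1) * coeff (n + 1) F = (c - n) * coeff n F := by
  have hn := congrArg (coeff n) h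
  rw [add_mul, one_mul, map_add, coeff_derivative, coeff_C_mul] at hn
  cases n with
  | zero => simpa [mul_comm] using hn
  | succ n =>
    rw [coeff_succ_X_mul, coeff_derivative] at hn
    push_cast at hn ⊢
    linear_combination hn

theorem coeff_subst_eq_sum_range {a : R⟦X⟧} (ha : constantCoeff a = 0) (f : R⟦X⟧) (n : ℕ) :
    coeff n (f.subst a) = ∑ m ∈ range (n + 1), coeff m f * coeff n (a ^ m) := by
  rw [coeff_subst' (HasSubst.of_constantCoeff_zero' ha)]
  refine finsum_eq_sum_of_support_subset _ fun m hm => ?_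
  simp only [Function.mem_support, coe_range, Set.mem_Iio, smul_eq_mul] at hm ⊢
  by_contra! h
  have hX : X ^ m ∣ a ^ m := pow_dvd_pow_of_dvd (X_dvd_iff.mpr ha) m
  exact hm (by rw [X_pow_dvd_iff.mp hX n (by omega), mul_zero])

variable {A : Type*} [CommRing A] [Algebra ℚ A]

theorem one_add_X_mul_derivative_log : (1 + X) * d⁄dX A (log A) = 1 := by
  ext n
  rw [deriv_log, add_mul, one_mul, map_add]
  cases n with
  | zero => simp
  | succ n => simp [coeff_succ_X_mul, pow_succ]

theorem one_add_X_mul_derivative_rescale_exp_subst_log (y : A) :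
    (1 + X) * d⁄dX A ((rescale y (exp A)).subst (log A))
      = C y * (rescale y (exp A)).subst (log A) := by
  rw [derivative_subst HasSubst.log, derivative_rescale, derivative_exp,
    subst_mul HasSubst.log, subst_C]
  change (1 + X) * (C y * _ * _) = _
  linear_combination (C y * (rescale y (exp A)).subst (log A)) *
    one_add_X_mul_derivative_log (A := A)

end PowerSeries

theorem Polynomial.eq_of_forall_sum_range_mul_pow_eq {R : Type*} [CommRing R] [IsDomain R]
    [Infinite R] {n : ℕ} {a b : ℕ → R}
    (h : ∀ y, ∑ l ∈ range (n + 1), a l * y ^ l = ∑ l ∈ range (n + 1), b l * y ^ l)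
    {m : ℕ} (hm : m ≤ n) : a m = b m := by
  have hp : ∑ l ∈ range (n + 1), monomial l (a l) = ∑ l ∈ range (n + 1), monomial l (b l) :=
    funext fun y => by simpa [eval_finsetSum] using h y
  simpa [finsetSum_coeff, coeff_monomial, Nat.lt_succ_iff.mpr hm]
    using congrArg (coeff · m) hp

theorem logOneAdd_eq_log : logOneAdd = log ℚ := by
  ext n
  simp [logOneAdd]

theorem expX_eq_rescale_exp (x : ℚ) : expX x = rescale x (exp ℚ) := by
  ext n
  simp [expX, coeff_exp, div_eq_mul_inv]

theorem coeff_onePow (c : ℚ) (n : ℕ) :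
    coeff n (onePow c) = (∏ i ∈ range n, (c - i)) / n ! :=
  coeff_mk _ _

theorem eq_onePow_of_one_add_X_mul_derivative {c : ℚ} {F : ℚ⟦X⟧}
    (h : (1 + X) * d⁄dX ℚ F = C c * F) (h0 : constantCoeff F = 1) : F = onePow c := by
  ext n
  induction n with
  | zero => simp [coeff_onePow, h0]
  | succ n ih =>
    have hrec := coeff_succ_of_one_add_X_mul_derivative h n
    rw [ih, coeff_onePow] at hrec
    rw [coeff_onePow, prod_range_succ, Nat.factorial_succ]
    have : (n : ℚ) + 1 ≠ 0 := by positivity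
    field_simp at hrec ⊢
    push_cast
    linear_combination hrec

theorem rescale_exp_subst_log (y : ℚ) : (rescale y (exp ℚ)).subst (log ℚ) = onePow y := by
  refine eq_onePow_of_one_add_X_mul_derivative
    (one_add_X_mul_derivative_rescale_exp_subst_log y) ?_
  rw [← coeff_zero_eq_constantCoeff_apply, coeff_subst_eq_sum_range constantCoeff_log]
  simp

theorem onePow_mul_onePow (a b : ℚ) : onePow a * onePow b = onePow (a + b) := by
  rw [← rescale_exp_subst_log, ← rescale_exp_subst_log, ← rescale_exp_subst_log,
    ← subst_mul HasSubst.log, exp_mul_exp_eq_exp_add]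

theorem onePow_one : onePow 1 = 1 + X := by
  ext n
  rw [coeff_onePow, map_add, coeff_one, coeff_X]
  match n with
  | 0 => simp
  | 1 => simp
  | n + 2 =>
    rw [prod_eq_zero (i := 1) (by simp) (by simp)]
    simp

theorem coeff_log_pow {n : ℕ} {c : ℕ → ℚ}
    (hc : ∀ x : ℚ, ∏ i ∈ range n, (x - i) = ∑ l ∈ range (n + 1), c l * x ^ l)
    {m : ℕ} (hm : m ≤ n) : coeff n (log ℚ ^ m) = m ! / n ! * c m := by
  have hpoly : ∀ y : ℚ, ∑ l ∈ range (n + 1), (coeff n (log ℚ ^ l) / l !) * y ^ l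
      = ∑ l ∈ range (n + 1), (c l / n !) * y ^ l := by
    intro y
    have hy := congrArg (coeff n) (rescale_exp_subst_log y)
    rw [coeff_subst_eq_sum_range constantCoeff_log, coeff_onePow, hc, sum_div] at hy
    convert hy using 2 with l
    · rw [coeff_rescale, coeff_exp, Algebra.algebraMap_self, RingHom.id_apply]
      ring
    · ring
  have := Polynomial.eq_of_forall_sum_range_mul_pow_eq hpoly hm
  field_simp at this ⊢
  linear_combination this

theorem mk_bernoulli_eval_mul_exp_sub_one (y : ℚ) :
    mk (fun n => (Polynomial.bernoulli n).eval y / n !) * (exp ℚ - 1) = X * rescale y (exp ℚ) := by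
  convert Polynomial.bernoulli_generating_function y using 3 with n
  simp [div_eq_inv_mul]

theorem eq_bernoulli_eval_of_mul_exp_sub_one {b : ℕ → ℚ} {y : ℚ}
    (h : mk (fun n => b n / n !) * (exp ℚ - 1) = X * rescale y (exp ℚ)) (n : ℕ) :
    b n = (Polynomial.bernoulli n).eval y := by
  have hexp : exp ℚ - 1 ≠ 0 := fun h0 => by
    simpa [coeff_exp] using congrArg (coeff 1) h0
  have := congrArg (coeff n)
    (mul_right_cancel₀ hexp (h.trans (mk_bernoulli_eval_mul_exp_sub_one y).symm))
  rw [coeff_mk, coeff_mk] at this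
  exact (div_left_inj' (by positivity)).mp this

theorem mk_bernoulli_eval_subst_log_mul_X (y : ℚ) :
    (mk fun n => (Polynomial.bernoulli n).eval y / n !).subst (log ℚ) * X
      = log ℚ * onePow y := by
  have h := congrArg (subst (log ℚ)) (mk_bernoulli_eval_mul_exp_sub_one y)
  rw [← coe_substAlgHom HasSubst.log] at h
  simp only [map_mul, map_sub, map_one] at h
  have hexp : (exp ℚ).subst (log ℚ) = 1 + X := by
    simpa [onePow_one] using rescale_exp_subst_log 1
  rwa [coe_substAlgHom, subst_X HasSubst.log, rescale_exp_subst_log, hexp,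
    add_sub_cancel_left] at h

theorem mk_daehee_eq_bernoulli_subst_log {D : ℚ⟦X⟧} {x : ℚ}
    (h : D * X * onePow x = (1 + X) * log ℚ) :
    D = (mk fun n => (Polynomial.bernoulli n).eval (1 - x) / n !).subst (log ℚ) := by
  have hX : (X : ℚ⟦X⟧) * (1 + X) ≠ 0 :=
    mul_ne_zero X_ne_zero fun h0 => by simpa using congrArg constantCoeff h0
  refine mul_right_cancel₀ hX ?_
  calc D * (X * (1 + X)) = D * X * onePow x * onePow (1 - x) := by
        rw [mul_assoc _ (onePow x), onePow_mul_onePow, add_sub_cancel, onePow_one, mul_assoc]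
    _ = (1 + X) * (log ℚ * onePow (1 - x)) := by rw [h, mul_assoc]
    _ = _ := by rw [← mk_bernoulli_eval_subst_log_mul_X]; ring

theorem daehee2_poly_stirling_bernoulli (Dhp Bp : ℕ → ℚ → ℚ) (s : ℕ → ℕ → ℚ)
    (hDhp : ∀ x : ℚ, PowerSeries.mk (fun n => Dhp n x / (Nat.factorial n : ℚ)) * PowerSeries.X * onePow x = (1 + PowerSeries.X) * logOneAdd) (hBp : ∀ x : ℚ, PowerSeries.mk (fun m => Bp m x / (Nat.factorial m : ℚ)) * (PowerSeries.exp ℚ - 1) = PowerSeries.X * expX x) (hs : ∀ (n : ℕ) (x : ℚ), ∏ i ∈ Finset.range n, (x - (i : ℚ)) = ∑ l ∈ Finset.range (n + 1), s n l * x ^ l) :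
    ∀ (n : ℕ) (x : ℚ), Dhp n x = ∑ l ∈ Finset.range (n + 1), (-1 : ℚ) ^ l * s n l * Bp l x := by
  intro n x
  have hB : ∀ m, Bp m x = (Polynomial.bernoulli m).eval x := fun m =>
    eq_bernoulli_eval_of_mul_exp_sub_one (by rw [hBp, expX_eq_rescale_exp]) m
  have hD := congrArg (coeff n) (mk_daehee_eq_bernoulli_subst_log (logOneAdd_eq_log ▸ hDhp x))
  rw [coeff_mk, coeff_subst_eq_sum_range constantCoeff_log, div_eq_iff (by positivity)] at hD
  rw [hD, sum_mul]
  refine sum_congr rfl fun m hm => ?_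
  rw [coeff_mk, coeff_log_pow (hs n) (Nat.lt_succ_iff.mp (mem_range.mp hm)), hB,
    Polynomial.bernoulli_eval_one_sub]
  field_simp
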